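/- arXiv:2603.29711 — 3 statements merged into one kernel-verified Lean document; each statement's English description precedes it below -/
import Mathlib

section
/- For every β, γ ≥ 1, the function N_{β,γ}(r) = r · Ψ_γ'((Ψ_β')^{-1}(r)) is convex on ℝ and superlinear at infinity, i.e. lim_{|r|→∞} N_{β,γ}(r)/|r| = +∞. -/
open Set Filter

/-!
Write `g = (Ψ_β')⁻¹` and `u = 1 - g(r)²`. Then `g' = u^β`, `N' = Ψ_γ'(g) + r u^(β-γ)` and
`N'' = 2 u^(β-γ) u^(β-1) (u^(1-β) - (β-γ) r g)`. With `x = g(r)`, i.e. `r = Ψ_β'(x)`, the bracket is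
nonnegative because `x Ψ_β'(x) ≥ 0`, `β - γ ≤ β - 1` and `(β-1) x Ψ_β'(x) ≤ (1-x²)^(1-β)`. For the
last one (an even statement) the difference of the two sides is `1` at `x = 0` and nondecreasing on
`[0,1)`, because its derivative is `(β-1) (x (1-x²)^(-β) - Ψ_β'(x)) ≥ 0`.

For superlinearity, `N(r)/|r| = Ψ_γ'(g|r|)` since `g` is odd, and `Ψ_γ'(x) ≥ -½ log(1-x)` for
`γ ≥ 1`, `x ∈ [0,1)`.
-/

/-- `Ψ_β'(r) = ∫₀^r (1-w²)^(-β) dw`. -/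
noncomputable def psiD (β r : ℝ) : ℝ := ∫ w in (0:ℝ)..r, (1 - w ^ 2) ^ (-β)

lemma one_sub_sq_pos {x : ℝ} (hx : x ∈ Ioo (-1:ℝ) 1) : 0 < 1 - x ^ 2 := by
  nlinarith [hx.1, hx.2]

lemma continuousAt_one_sub_sq_rpow (c : ℝ) {x : ℝ} (hx : x ∈ Ioo (-1:ℝ) 1) :
    ContinuousAt (fun w : ℝ => (1 - w ^ 2) ^ (-c)) x :=
  (continuousAt_const.sub (continuousAt_pow x 2)).rpow_const (Or.inl (one_sub_sq_pos hx).ne')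

lemma intervalIntegrable_one_sub_sq_rpow (c : ℝ) {x : ℝ} (hx : x ∈ Ioo (-1:ℝ) 1) :
    IntervalIntegrable (fun w : ℝ => (1 - w ^ 2) ^ (-c)) MeasureTheory.volume 0 x :=
  ContinuousOn.intervalIntegrable fun _ hw =>
    (continuousAt_one_sub_sq_rpow c
      (ordConnected_Ioo.uIcc_subset ⟨by norm_num, by norm_num⟩ hx hw)).continuousWithinAt

lemma hasDerivAt_psiD (c : ℝ) {x : ℝ} (hx : x ∈ Ioo (-1:ℝ) 1) :
    HasDerivAt (psiD c) ((1 - x ^ 2) ^ (-c)) x :=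
  intervalIntegral.integral_hasDerivAt_right (intervalIntegrable_one_sub_sq_rpow c hx)
    (ContinuousOn.stronglyMeasurableAtFilter isOpen_Ioo
      (fun _ hw => (continuousAt_one_sub_sq_rpow c hw).continuousWithinAt) x hx)
    (continuousAt_one_sub_sq_rpow c hx)

lemma psiD_zero (c : ℝ) : psiD c 0 = 0 := intervalIntegral.integral_same

lemma psiD_neg (c r : ℝ) : psiD c (-r) = -psiD c r := by
  have h := intervalIntegral.integral_comp_neg (a := 0) (b := r) fun w : ℝ => (1 - w ^ 2) ^ (-c)
  simp only [neg_sq, neg_zero] at h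
  rw [psiD, intervalIntegral.integral_symm, ← h, psiD]

lemma strictMonoOn_psiD (c : ℝ) : StrictMonoOn (psiD c) (Ioo (-1:ℝ) 1) :=
  strictMonoOn_of_hasDerivWithinAt_pos (convex_Ioo _ _)
    (fun _ hx => (hasDerivAt_psiD c hx).continuousAt.continuousWithinAt)
    (fun _ hx => (hasDerivAt_psiD c (interior_subset hx)).hasDerivWithinAt)
    fun _ hx => Real.rpow_pos_of_pos (one_sub_sq_pos (interior_subset hx)) _

lemma mul_psiD_nonneg (c : ℝ) {x : ℝ} (hx : x ∈ Ioo (-1:ℝ) 1) : 0 ≤ x * psiD c x := by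
  have h0 : (0:ℝ) ∈ Ioo (-1:ℝ) 1 := ⟨by norm_num, by norm_num⟩
  rcases le_total 0 x with h | h
  · exact mul_nonneg h ((psiD_zero c).symm.trans_le ((strictMonoOn_psiD c).monotoneOn h0 hx h))
  · exact mul_nonneg_of_nonpos_of_nonpos h
      (((strictMonoOn_psiD c).monotoneOn hx h0 h).trans_eq (psiD_zero c))

lemma psiD_le_mul_rpow {c x : ℝ} (hc : 0 ≤ c) (hx : x ∈ Ico (0:ℝ) 1) :
    psiD c x ≤ x * (1 - x ^ 2) ^ (-c) := by
  have hx' : x ∈ Ioo (-1:ℝ) 1 := ⟨by linarith [hx.1], hx.2⟩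
  have h := intervalIntegral.integral_mono_on hx.1 (intervalIntegrable_one_sub_sq_rpow c hx')
    intervalIntegrable_const fun w hw => Real.rpow_le_rpow_of_nonpos (one_sub_sq_pos hx')
      (by nlinarith [hw.1, hw.2]) (neg_nonpos.2 hc)
  simpa [psiD, mul_comm] using h

lemma sub_one_mul_mul_psiD_le_rpow {β x : ℝ} (hβ : 1 ≤ β) (hx : x ∈ Ioo (-1:ℝ) 1) :
    (β - 1) * (x * psiD β x) ≤ (1 - x ^ 2) ^ (1 - β) := by
  wlog hx0 : 0 ≤ x generalizing x
  · simpa [psiD_neg] using this (x := -x) ⟨by linarith [hx.2], by linarith [hx.1]⟩ (by linarith)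
  set F : ℝ → ℝ := fun t => (1 - t ^ 2) ^ (1 - β) - (β - 1) * (t * psiD β t)
  have hF : ∀ t ∈ Ioo (-1:ℝ) 1,
      HasDerivAt F ((β - 1) * (t * (1 - t ^ 2) ^ (-β) - psiD β t)) t := by
    intro t ht
    have h₁ := ((hasDerivAt_pow 2 t).const_sub 1).rpow_const
      (p := 1 - β) (Or.inl (one_sub_sq_pos ht).ne')
    have h₂ := ((hasDerivAt_id' t).mul (hasDerivAt_psiD β ht)).const_mul (β - 1)
    refine (h₁.sub h₂).congr_deriv ?_
    rw [sub_sub_cancel_left]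
    push_cast
    ring
  have hmono : MonotoneOn F (Ico 0 1) := by
    refine monotoneOn_of_hasDerivWithinAt_nonneg (convex_Ico 0 1)
      (f' := fun t => (β - 1) * (t * (1 - t ^ 2) ^ (-β) - psiD β t))
      (fun t ht => (hF t ⟨by linarith [ht.1], ht.2⟩).continuousAt.continuousWithinAt)
      (fun t ht => ?_) fun t ht => ?_
    all_goals rw [interior_Ico] at ht
    · exact (hF t ⟨by linarith [ht.1], ht.2⟩).hasDerivWithinAt
    · exact mul_nonneg (by linarith) (sub_nonneg.2 (by
        simpa [mul_comm] using psiD_le_mul_rpow (by linarith) ⟨ht.1.le, ht.2⟩))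
  have h : F 0 ≤ F x := hmono ⟨le_rfl, one_pos⟩ ⟨hx0, hx.2⟩ hx0
  norm_num [F, psiD_zero] at h
  linarith

lemma integral_inv_one_sub {x : ℝ} (hx : x < 1) :
    ∫ w in (0:ℝ)..x, (1 - w)⁻¹ = -Real.log (1 - x) := by
  rw [intervalIntegral.integral_comp_sub_left (fun u : ℝ => u⁻¹), sub_zero,
    integral_inv_of_pos (by linarith) one_pos, one_div, Real.log_inv]

lemma neg_log_one_sub_le_two_mul_psiD {c x : ℝ} (hc : 1 ≤ c) (hx : x ∈ Ico (0:ℝ) 1) :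
    -Real.log (1 - x) ≤ 2 * psiD c x := by
  have hint : IntervalIntegrable (fun w : ℝ => (1 - w)⁻¹) MeasureTheory.volume 0 x := by
    refine ContinuousOn.intervalIntegrable fun w hw => ?_
    rw [uIcc_of_le hx.1] at hw
    have : 1 - w ≠ 0 := (sub_pos.2 (hw.2.trans_lt hx.2)).ne'
    exact ContinuousAt.continuousWithinAt (by fun_prop (disch := assumption))
  rw [← integral_inv_one_sub hx.2, psiD, ← intervalIntegral.integral_const_mul]
  refine intervalIntegral.integral_mono_on hx.1 hint
    ((intervalIntegrable_one_sub_sq_rpow c ⟨by linarith [hx.1], hx.2⟩).const_mul 2) fun w hw => ?_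
  have hw₁ : 0 < 1 - w := by linarith [hw.2, hx.2]
  have hw₂ : 0 < 1 - w ^ 2 := by nlinarith [hw.1]
  calc (1 - w)⁻¹ ≤ 2 / (1 - w ^ 2) := by
        rw [inv_eq_one_div, div_le_div_iff₀ hw₁ hw₂]
        nlinarith [hw.1]
    _ = 2 * (1 - w ^ 2) ^ (-1:ℝ) := by rw [Real.rpow_neg_one, div_eq_mul_inv]
    _ ≤ 2 * (1 - w ^ 2) ^ (-c) := mul_le_mul_of_nonneg_left
        (Real.rpow_le_rpow_of_exponent_ge hw₂ (by nlinarith [hw.1]) (by linarith)) two_pos.le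

lemma exists_le_psiD {c : ℝ} (hc : 1 ≤ c) (M : ℝ) : ∃ x ∈ Ico (0:ℝ) 1, M ≤ psiD c x := by
  set x := 1 - Real.exp (-(2 * max M 0))
  have hx : x ∈ Ico (0:ℝ) 1 := ⟨sub_nonneg.2 (Real.exp_le_one_iff.2 (by simp)),
    sub_lt_self _ (Real.exp_pos _)⟩
  refine ⟨x, hx, ?_⟩
  have h := neg_log_one_sub_le_two_mul_psiD hc hx
  simp only [x, sub_sub_cancel, Real.log_exp] at h
  linarith [le_max_left M 0]

section RightInverse

variable {β γ : ℝ} {g : ℝ → ℝ}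

lemma leftInvOn_psiD (hg_mem : ∀ s, g s ∈ Ioo (-1:ℝ) 1) (hg_right : ∀ s, psiD β (g s) = s) :
    LeftInvOn g (psiD β) (Ioo (-1:ℝ) 1) :=
  fun _ hr => (strictMonoOn_psiD β).injOn (hg_mem _) hr (hg_right _)

lemma strictMono_of_psiD_comp (hg_mem : ∀ s, g s ∈ Ioo (-1:ℝ) 1)
    (hg_right : ∀ s, psiD β (g s) = s) : StrictMono g := fun s t hst =>
  ((strictMonoOn_psiD β).lt_iff_lt (hg_mem s) (hg_mem t)).1 (by rwa [hg_right, hg_right])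

lemma apply_neg_of_psiD_comp (hg_mem : ∀ s, g s ∈ Ioo (-1:ℝ) 1) (hg_right : ∀ s, psiD β (g s) = s)
    (s : ℝ) : g (-s) = -g s := by
  have hs : -g s ∈ Ioo (-1:ℝ) 1 := ⟨by linarith [(hg_mem s).2], by linarith [(hg_mem s).1]⟩
  rw [← leftInvOn_psiD hg_mem hg_right hs, psiD_neg, hg_right]

lemma continuous_of_psiD_comp (hg_mem : ∀ s, g s ∈ Ioo (-1:ℝ) 1)
    (hg_right : ∀ s, psiD β (g s) = s) : Continuous g :=
  continuous_iff_continuousAt.2 fun a =>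
    continuousAt_of_monotoneOn_of_image_mem_nhds
      ((strictMono_of_psiD_comp hg_mem hg_right).monotone.monotoneOn univ) univ_mem
      (mem_of_superset (isOpen_Ioo.mem_nhds (hg_mem a)) fun r hr =>
        ⟨psiD β r, trivial, leftInvOn_psiD hg_mem hg_right hr⟩)

lemma hasDerivAt_of_psiD_comp (hg_mem : ∀ s, g s ∈ Ioo (-1:ℝ) 1)
    (hg_right : ∀ s, psiD β (g s) = s) (s : ℝ) : HasDerivAt g ((1 - g s ^ 2) ^ β) s := by
  have h := (hasDerivAt_psiD β (hg_mem s)).of_local_left_inverse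
    (continuous_of_psiD_comp hg_mem hg_right).continuousAt
    (Real.rpow_pos_of_pos (one_sub_sq_pos (hg_mem s)) _).ne' (Eventually.of_forall hg_right)
  rwa [Real.rpow_neg (one_sub_sq_pos (hg_mem s)).le, inv_inv] at h

lemma hasDerivAt_psiD_comp (γ : ℝ) (hg_mem : ∀ s, g s ∈ Ioo (-1:ℝ) 1)
    (hg_right : ∀ s, psiD β (g s) = s) (r : ℝ) :
    HasDerivAt (fun r => psiD γ (g r)) ((1 - g r ^ 2) ^ (β - γ)) r := by
  refine ((hasDerivAt_psiD γ (hg_mem r)).comp r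
    (hasDerivAt_of_psiD_comp hg_mem hg_right r)).congr_deriv ?_
  rw [← Real.rpow_add (one_sub_sq_pos (hg_mem r)), neg_add_eq_sub]

lemma tendsto_psiD_comp_atTop (hγ : 1 ≤ γ) (hg_mem : ∀ s, g s ∈ Ioo (-1:ℝ) 1)
    (hg_right : ∀ s, psiD β (g s) = s) : Tendsto (fun r => psiD γ (g r)) atTop atTop := by
  refine tendsto_atTop.2 fun M => ?_
  obtain ⟨x, hx, hMx⟩ := exists_le_psiD hγ M
  have hx' : x ∈ Ioo (-1:ℝ) 1 := ⟨by linarith [hx.1], hx.2⟩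
  filter_upwards [eventually_ge_atTop (psiD β x)] with r hr
  rw [← hg_right r, (strictMonoOn_psiD β).le_iff_le hx' (hg_mem r)] at hr
  exact hMx.trans ((strictMonoOn_psiD γ).monotoneOn hx' (hg_mem r) hr)

lemma hasDerivAt_mul_psiD_comp (hg_mem : ∀ s, g s ∈ Ioo (-1:ℝ) 1)
    (hg_right : ∀ s, psiD β (g s) = s) (r : ℝ) :
    HasDerivAt (fun r => r * psiD γ (g r)) (psiD γ (g r) + r * (1 - g r ^ 2) ^ (β - γ)) r :=
  ((hasDerivAt_id' r).mul (hasDerivAt_psiD_comp γ hg_mem hg_right r)).congr_deriv (by ring)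

lemma hasDerivAt_deriv_mul_psiD_comp (hg_mem : ∀ s, g s ∈ Ioo (-1:ℝ) 1)
    (hg_right : ∀ s, psiD β (g s) = s) (r : ℝ) :
    HasDerivAt (fun r => psiD γ (g r) + r * (1 - g r ^ 2) ^ (β - γ))
      (2 * ((1 - g r ^ 2) ^ (β - γ) * (1 - g r ^ 2) ^ (β - 1)) *
        ((1 - g r ^ 2) ^ (1 - β) - (β - γ) * (r * g r))) r := by
  have hu := one_sub_sq_pos (hg_mem r)
  have h₁ := ((hasDerivAt_of_psiD_comp hg_mem hg_right r).pow 2).const_sub 1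
  have h₂ := (hasDerivAt_psiD_comp γ hg_mem hg_right r).add
    ((hasDerivAt_id' r).mul (h₁.rpow_const (p := β - γ) (Or.inl hu.ne')))
  refine h₂.congr_deriv ?_
  have e₁ : (1 - g r ^ 2) ^ (β - γ - 1) * (1 - g r ^ 2) ^ β =
      (1 - g r ^ 2) ^ (β - γ) * (1 - g r ^ 2) ^ (β - 1) := by
    rw [← Real.rpow_add hu, ← Real.rpow_add hu]; ring_nf
  have e₂ : (1 - g r ^ 2) ^ (β - 1) * (1 - g r ^ 2) ^ (1 - β) = 1 := by
    rw [← Real.rpow_add hu]; simp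
  push_cast
  linear_combination (-2 * (β - γ) * r * g r) * e₁ - 2 * (1 - g r ^ 2) ^ (β - γ) * e₂

lemma convexOn_mul_psiD_comp (hβ : 1 ≤ β) (hγ : 1 ≤ γ) (hg_mem : ∀ s, g s ∈ Ioo (-1:ℝ) 1)
    (hg_right : ∀ s, psiD β (g s) = s) : ConvexOn ℝ univ (fun r => r * psiD γ (g r)) := by
  refine Monotone.convexOn_univ_of_deriv
    (fun r => (hasDerivAt_mul_psiD_comp hg_mem hg_right r).differentiableAt) ?_
  rw [funext fun r => (hasDerivAt_mul_psiD_comp (γ := γ) hg_mem hg_right r).deriv]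
  refine monotone_of_hasDerivAt_nonneg (hasDerivAt_deriv_mul_psiD_comp hg_mem hg_right)
    fun r => mul_nonneg ?_ (sub_nonneg.2 ?_)
  · have hu := (one_sub_sq_pos (hg_mem r)).le
    positivity
  · have hbound := sub_one_mul_mul_psiD_le_rpow hβ (hg_mem r)
    have hnonneg := mul_psiD_nonneg β (hg_mem r)
    rw [hg_right] at hbound hnonneg
    nlinarith

lemma tendsto_mul_psiD_comp_div_abs (hγ : 1 ≤ γ) (hg_mem : ∀ s, g s ∈ Ioo (-1:ℝ) 1)
    (hg_right : ∀ s, psiD β (g s) = s) :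
    Tendsto (fun r => r * psiD γ (g r) / |r|) (cocompact ℝ) atTop := by
  refine ((tendsto_psiD_comp_atTop hγ hg_mem hg_right).comp tendsto_norm_cocompact_atTop).congr' ?_
  filter_upwards [(isCompact_singleton (x := (0:ℝ))).compl_mem_cocompact] with r hr
  simp only [Function.comp_apply, Real.norm_eq_abs]
  rcases lt_or_gt_of_ne hr with hr | hr
  · rw [abs_of_neg hr, apply_neg_of_psiD_comp hg_mem hg_right, psiD_neg, div_neg,
      mul_div_cancel_left₀ _ hr.ne]
  · rw [abs_of_pos hr, mul_div_cancel_left₀ _ hr.ne']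

end RightInverse

theorem stmt3_general (β γ : ℝ) (hβ : 1 ≤ β) (hγ : 1 ≤ γ) (g : ℝ → ℝ)
    (hg_mem : ∀ s : ℝ, g s ∈ Ioo (-1:ℝ) 1)
    (hg_right : ∀ s : ℝ, psiD β (g s) = s) :
    ConvexOn ℝ Set.univ (fun r : ℝ => r * psiD γ (g r)) ∧
    Tendsto (fun r : ℝ => (r * psiD γ (g r)) / |r|) (cocompact ℝ) atTop :=
  ⟨convexOn_mul_psiD_comp hβ hγ hg_mem hg_right, tendsto_mul_psiD_comp_div_abs hγ hg_mem hg_right⟩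

/-- for β, γ ≥ 1, with `g = (Ψ_β')⁻¹ : ℝ → (-1,1)`, the function
`N_{β,γ}(r) = r · Ψ_γ'(g r)` is convex on ℝ and superlinear at infinity. -/
theorem stmt3 (β γ : ℝ) (hβ : 1 ≤ β) (hγ : 1 ≤ γ) (g : ℝ → ℝ)
    (hg_mem : ∀ s : ℝ, g s ∈ Ioo (-1:ℝ) 1)
    (hg_right : ∀ s : ℝ, psiD β (g s) = s)
    (hg_left : ∀ r ∈ Ioo (-1:ℝ) 1, g (psiD β r) = r) :
    ConvexOn ℝ Set.univ (fun r : ℝ => r * psiD γ (g r)) ∧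
    Tendsto (fun r : ℝ => (r * psiD γ (g r)) / |r|) (cocompact ℝ) atTop :=
  stmt3_general β γ hβ hγ g hg_mem hg_right
end

section
/- For β > 1 and γ > 1 there exists a constant c > 0 such that N_{β,γ}(r) ≥ c·|r|^{(β+γ-2)/(β-1)} for all |r| sufficiently large, while for β = 1 and γ ≥ 1 there exists c > 0 with N_{1,γ}(r) ≥ c·|r|² for all |r| sufficiently large. -/
open Set MeasureTheory intervalIntegral

lemma psiD_neg_s4 (β t : ℝ) : psiD β (-t) = -psiD β t := by
  have h := integral_comp_neg (a := 0) (b := t) (fun w : ℝ => (1 - w ^ 2) ^ (-β))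
  simp only [neg_sq, neg_zero] at h
  rw [psiD, psiD, h, ← integral_symm]

lemma psiD_nonneg (β : ℝ) {t : ℝ} (ht0 : 0 ≤ t) (ht1 : t ≤ 1) : 0 ≤ psiD β t :=
  integral_nonneg ht0 fun w hw => Real.rpow_nonneg (by nlinarith [hw.1, hw.2]) _

lemma abs_psiD (β : ℝ) {t : ℝ} (ht : t ∈ Icc (-1:ℝ) 1) : |psiD β t| = psiD β |t| := by
  rcases le_or_gt 0 t with h | h
  · rw [abs_of_nonneg h, abs_of_nonneg (psiD_nonneg β h ht.2)]
  · have hneg : 0 ≤ psiD β (-t) := psiD_nonneg β (by linarith) (by linarith [ht.1])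
    rw [psiD_neg_s4] at hneg
    rw [abs_of_neg h, psiD_neg_s4, abs_of_nonpos (by linarith)]

lemma psiD_mul_psiD_abs (β γ t : ℝ) : psiD β t * psiD γ t = psiD β |t| * psiD γ |t| := by
  rcases le_or_gt 0 t with h | h
  · rw [abs_of_nonneg h]
  · rw [abs_of_neg h, psiD_neg_s4, psiD_neg_s4, neg_mul_neg]

lemma intervalIntegrable_psiD_integrand (β : ℝ) {a b : ℝ} (ha : a ∈ Ioo (-1:ℝ) 1)
    (hb : b ∈ Ioo (-1:ℝ) 1) :
    IntervalIntegrable (fun w : ℝ => (1 - w ^ 2) ^ (-β)) volume a b := by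
  refine (ContinuousOn.rpow_const (by fun_prop) fun w hw => Or.inl ?_).intervalIntegrable
  have hw' := ordConnected_Ioo.uIcc_subset ha hb hw
  nlinarith [hw'.1, hw'.2]

lemma intervalIntegrable_one_sub_rpow (β : ℝ) {t : ℝ} (ht0 : 0 ≤ t) (ht1 : t < 1) :
    IntervalIntegrable (fun w : ℝ => (1 - w) ^ (-β)) volume 0 t := by
  refine (ContinuousOn.rpow_const (by fun_prop) fun w hw => Or.inl ?_).intervalIntegrable
  rw [uIcc_of_le ht0] at hw
  linarith [hw.2]

lemma integral_one_sub_rpow {β t : ℝ} (hβ : β ≠ 1) (ht : t < 1) :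
    ∫ w in (0:ℝ)..t, (1 - w) ^ (-β) = ((1 - t) ^ (1 - β) - 1) / (β - 1) := by
  have hne : -β ≠ -1 := fun h => hβ (neg_injective h)
  have hpos : (0:ℝ) ∉ uIcc (1 - t) 1 := fun h => by
    rcases mem_uIcc.mp h with ⟨h1, _⟩ | ⟨h1, _⟩ <;> linarith
  rw [integral_comp_sub_left (fun x : ℝ => x ^ (-β)), sub_zero, integral_rpow (Or.inr ⟨hne, hpos⟩),
    Real.one_rpow, show -β + 1 = -(β - 1) by ring, show 1 - β = -(β - 1) by ring]
  have : β - 1 ≠ 0 := sub_ne_zero.mpr hβ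
  field_simp
  ring

section IntegrandBounds

variable {β γ w : ℝ}

lemma one_sub_sq_rpow_le (hβ : 0 ≤ β) (hw0 : 0 ≤ w) (hw1 : w < 1) :
    (1 - w ^ 2) ^ (-β) ≤ (1 - w) ^ (-β) :=
  Real.rpow_le_rpow_of_nonpos (by linarith) (by nlinarith) (by linarith)

lemma two_rpow_mul_le_one_sub_sq_rpow (hβ : 0 ≤ β) (hw0 : 0 ≤ w) (hw1 : w < 1) :
    (2:ℝ) ^ (-β) * (1 - w) ^ (-β) ≤ (1 - w ^ 2) ^ (-β) := by
  rw [← Real.mul_rpow zero_le_two (by linarith)]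
  exact Real.rpow_le_rpow_of_nonpos (by nlinarith) (by nlinarith) (by linarith)

lemma one_sub_sq_rpow_mono (hβγ : β ≤ γ) (hw0 : 0 ≤ w) (hw1 : w < 1) :
    (1 - w ^ 2) ^ (-β) ≤ (1 - w ^ 2) ^ (-γ) :=
  Real.rpow_le_rpow_of_exponent_ge (by nlinarith) (by nlinarith) (by linarith)

end IntegrandBounds

section Comparison

variable {β γ t : ℝ}

lemma psiD_le_psiD (hβγ : β ≤ γ) (ht0 : 0 ≤ t) (ht1 : t < 1) : psiD β t ≤ psiD γ t := by
  have ht : t ∈ Ioo (-1:ℝ) 1 := ⟨by linarith, ht1⟩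
  refine integral_mono_on ht0 (intervalIntegrable_psiD_integrand β (by norm_num) ht)
    (intervalIntegrable_psiD_integrand γ (by norm_num) ht) fun w hw => ?_
  exact one_sub_sq_rpow_mono hβγ hw.1 (hw.2.trans_lt ht1)

lemma psiD_le_one_sub_rpow (hβ : 1 < β) (ht0 : 0 ≤ t) (ht1 : t < 1) :
    psiD β t ≤ (1 - t) ^ (1 - β) / (β - 1) := by
  have hint : psiD β t ≤ ∫ w in (0:ℝ)..t, (1 - w) ^ (-β) :=
    integral_mono_on ht0 (intervalIntegrable_psiD_integrand β (by norm_num) ⟨by linarith, ht1⟩)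
      (intervalIntegrable_one_sub_rpow β ht0 ht1) fun w hw =>
        one_sub_sq_rpow_le (by linarith) hw.1 (hw.2.trans_lt ht1)
  rw [integral_one_sub_rpow hβ.ne' ht1] at hint
  exact hint.trans (div_le_div_of_nonneg_right (by linarith) (by linarith))

lemma one_sub_rpow_le_psiD (hγ : 1 < γ) (ht0 : 0 ≤ t) (ht1 : t < 1) :
    (2:ℝ) ^ (-γ) * (((1 - t) ^ (1 - γ) - 1) / (γ - 1)) ≤ psiD γ t := by
  rw [← integral_one_sub_rpow hγ.ne' ht1, ← intervalIntegral.integral_const_mul]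
  exact integral_mono_on ht0 ((intervalIntegrable_one_sub_rpow γ ht0 ht1).const_mul _)
    (intervalIntegrable_psiD_integrand γ (by norm_num) ⟨by linarith, ht1⟩) fun w hw =>
      two_rpow_mul_le_one_sub_sq_rpow (by linarith) hw.1 (hw.2.trans_lt ht1)

lemma rpow_psiD_le_one_sub_rpow (hβ : 1 < β) (hγ : 1 ≤ γ) (ht0 : 0 ≤ t) (ht1 : t < 1) :
    ((β - 1) * psiD β t) ^ ((γ - 1) / (β - 1)) ≤ (1 - t) ^ (1 - γ) := by
  have hβ1 : 0 < β - 1 := by linarith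
  have hbound : (β - 1) * psiD β t ≤ (1 - t) ^ (1 - β) := by
    have := psiD_le_one_sub_rpow hβ ht0 ht1
    rwa [le_div_iff₀ hβ1, mul_comm] at this
  calc ((β - 1) * psiD β t) ^ ((γ - 1) / (β - 1))
      ≤ ((1 - t) ^ (1 - β)) ^ ((γ - 1) / (β - 1)) :=
        Real.rpow_le_rpow (mul_nonneg hβ1.le (psiD_nonneg β ht0 ht1.le)) hbound
          (div_nonneg (by linarith) hβ1.le)
    _ = (1 - t) ^ (1 - γ) := by
        rw [← Real.rpow_mul (by linarith)]
        congr 1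
        field_simp
        ring

end Comparison

lemma exists_psiD_mul_psiD_ge_rpow {β γ : ℝ} (hβ : 1 < β) (hγ : 1 < γ) :
    ∃ c > (0:ℝ), ∃ R > (0:ℝ), ∀ t ∈ Ico (0:ℝ) 1, R ≤ psiD β t →
      c * psiD β t ^ ((β + γ - 2) / (β - 1)) ≤ psiD β t * psiD γ t := by
  set q := (γ - 1) / (β - 1) with hq_def
  have hβ1 : 0 < β - 1 := by linarith
  have hq : 0 < q := div_pos (by linarith) hβ1
  -- past `R`, the `-1` in the lower bound on `Ψ_γ'` costs at most half of the main term
  set R := (2:ℝ) ^ q⁻¹ / (β - 1)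
  set c := (2:ℝ) ^ (-γ) / (γ - 1) * (β - 1) ^ q / 2
  refine ⟨c, by positivity, R, by positivity, fun t ⟨ht0, ht1⟩ hR => ?_⟩
  set s := psiD β t
  have hs : 0 < s := lt_of_lt_of_le (by positivity) hR
  have htwo : 2 ≤ ((β - 1) * s) ^ q := by
    calc (2:ℝ) = ((β - 1) * R) ^ q := by
          rw [mul_div_cancel₀ _ hβ1.ne', ← Real.rpow_mul zero_le_two, inv_mul_cancel₀ hq.ne',
            Real.rpow_one]
      _ ≤ ((β - 1) * s) ^ q := by gcongr
  have hlow : c * s ^ q ≤ psiD γ t := by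
    have hmain := rpow_psiD_le_one_sub_rpow hβ hγ.le ht0 ht1
    refine le_trans ?_ (one_sub_rpow_le_psiD hγ ht0 ht1)
    rw [Real.mul_rpow hβ1.le hs.le] at htwo hmain
    calc c * s ^ q = (2:ℝ) ^ (-γ) / (γ - 1) * ((β - 1) ^ q * s ^ q / 2) := by ring
      _ ≤ (2:ℝ) ^ (-γ) / (γ - 1) * ((1 - t) ^ (1 - γ) - 1) := by gcongr; linarith
      _ = _ := by ring
  have hexp : (β + γ - 2) / (β - 1) = 1 + q := by
    rw [hq_def]
    field_simp
    ring
  calc c * s ^ ((β + γ - 2) / (β - 1)) = s * (c * s ^ q) := by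
        rw [hexp, Real.rpow_add hs, Real.rpow_one]
        ring
    _ ≤ s * psiD γ t := by gcongr

theorem stmt4_general (β γ : ℝ) (hγ : 1 ≤ γ) (g : ℝ → ℝ)
    (hg_mem : ∀ s : ℝ, g s ∈ Ioo (-1:ℝ) 1)
    (hg_right : ∀ s : ℝ, psiD β (g s) = s) :
    ((1 < β ∧ 1 < γ) → ∃ c > (0:ℝ), ∃ R > (0:ℝ), ∀ r : ℝ, R ≤ |r| →
      c * |r| ^ ((β + γ - 2) / (β - 1)) ≤ r * psiD γ (g r)) ∧
    (β = 1 → ∃ c > (0:ℝ), ∃ R > (0:ℝ), ∀ r : ℝ, R ≤ |r| →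
      c * |r| ^ (2:ℕ) ≤ r * psiD γ (g r)) := by
  have habs_mem : ∀ r, |g r| ∈ Ico (0:ℝ) 1 := fun r =>
    ⟨abs_nonneg _, abs_lt.mpr (hg_mem r)⟩
  have habs : ∀ r, |r| = psiD β |g r| := fun r => by
    rw [← abs_psiD β (Ioo_subset_Icc_self (hg_mem r)), hg_right]
  have hN : ∀ r, r * psiD γ (g r) = psiD β |g r| * psiD γ |g r| := fun r => by
    rw [← psiD_mul_psiD_abs, hg_right]
  constructor
  · rintro ⟨hβ1, hγ1⟩
    obtain ⟨c, hc, R, hR, hgrowth⟩ := exists_psiD_mul_psiD_ge_rpow hβ1 hγ1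
    refine ⟨c, hc, R, hR, fun r hr => ?_⟩
    rw [habs] at hr
    rw [habs, hN]
    exact hgrowth _ (habs_mem r) hr
  · rintro rfl
    refine ⟨1, one_pos, 1, one_pos, fun r _ => ?_⟩
    obtain ⟨ht0, ht1⟩ := habs_mem r
    rw [habs, hN, one_mul, sq]
    exact mul_le_mul_of_nonneg_left (psiD_le_psiD hγ ht0 ht1) (psiD_nonneg 1 ht0 ht1.le)

/-- lower growth bounds for `N_{β,γ}(r) = r · Ψ_γ'((Ψ_β')⁻¹ r)`:
for β > 1, γ > 1 one has `N_{β,γ}(r) ≥ c |r|^((β+γ-2)/(β-1))` for |r| large, and for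
β = 1, γ ≥ 1 one has `N_{1,γ}(r) ≥ c |r|²` for |r| large. -/
theorem stmt4 (β γ : ℝ) (hβ : 1 ≤ β) (hγ : 1 ≤ γ) (g : ℝ → ℝ)
    (hg_mem : ∀ s : ℝ, g s ∈ Ioo (-1:ℝ) 1)
    (hg_right : ∀ s : ℝ, psiD β (g s) = s)
    (hg_left : ∀ r ∈ Ioo (-1:ℝ) 1, g (psiD β r) = r) :
    ((1 < β ∧ 1 < γ) → ∃ c > (0:ℝ), ∃ R > (0:ℝ), ∀ r : ℝ, R ≤ |r| →
      c * |r| ^ ((β + γ - 2) / (β - 1)) ≤ r * psiD γ (g r)) ∧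
    (β = 1 → ∃ c > (0:ℝ), ∃ R > (0:ℝ), ∀ r : ℝ, R ≤ |r| →
      c * |r| ^ (2:ℕ) ≤ r * psiD γ (g r)) :=
  stmt4_general β γ hγ g hg_mem hg_right
end

section
/- For every ς, ζ ≥ 1 with ς + ζ > 2 there exists a constant K > 0 such that, for every ε ∈ (0,1) and every r ∈ ℝ, Ψ_{ς,ε}'(r) · Ψ_{ζ,ε}'(r) ≥ K · Ψ_{ς+ζ-2,ε}''(r) − K^{-1}. -/
/-!
The regularised mobility `m_{a,ε}(r)` is comparable to `g^a`, where
`g = max (1 - |r|) 0 + ε`: averaging `m_a` over `(r - ε, r + ε)` gives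
`(g/4)^a ≤ m_{a,ε}(r) ≤ 2 (2g)^a`. For `r ≥ (1 + ε)/2`, integrating `1/m_{a,ε} ≳ g^{-a}` over
the interval of length `g` ending at `min r 1` gives `Ψ'_{a,ε}(r) ≳ g^{1-a}`, hence
`Ψ'_ς Ψ'_ζ ≳ g^{2-ς-ζ} ≳ 1/m_{ς+ζ-2,ε}`. For `0 ≤ r < (1 + ε)/2` we have `g ≥ 1/2`, so
`1/m_{ς+ζ-2,ε}` is bounded, while `Ψ'_ς Ψ'_ζ ≥ 0`. Negative `r` follow by evenness.
-/

open MeasureTheory Set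

/-- degenerate mobility `m_ς(r) = (1-r²)^ς` on [-1,1], extended by 0. -/
noncomputable def mob (ς r : ℝ) : ℝ := if |r| ≤ 1 then (1 - r ^ 2) ^ ς else 0

/-- the standard bump `ρ(s) = exp(-1/(1-s²))` on (-1,1). -/
noncomputable def bump (s : ℝ) : ℝ := if |s| < 1 then Real.exp (-(1 - s ^ 2)⁻¹) else 0

/-- normalisation constant `c_N`. -/
noncomputable def mollConst : ℝ := (∫ s, bump s)⁻¹

/-- mollifier `ρ_ε(s) = c_N ε⁻¹ ρ(s/ε)`. -/
noncomputable def moll (ε s : ℝ) : ℝ := mollConst * ε⁻¹ * bump (s / ε)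

/-- regularised mobility `m_{ς,ε} = ρ_ε * m_ς + ε^ς`. -/
noncomputable def mobE (ς ε r : ℝ) : ℝ := (∫ s, moll ε s * mob ς (r - s)) + ε ^ ς

/-- `Ψ'_{ς,ε}(r) = ∫₀^r m_{ς,ε}(w)⁻¹ dw`. -/
noncomputable def psiE' (ς ε r : ℝ) : ℝ := ∫ w in (0:ℝ)..r, (mobE ς ε w)⁻¹

lemma bump_nonneg (s : ℝ) : 0 ≤ bump s := by
  unfold bump
  split_ifs <;> positivity

lemma bump_le_one (s : ℝ) : bump s ≤ 1 := by
  unfold bump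
  split_ifs with hs
  · have : 0 < 1 - s ^ 2 := by nlinarith [sq_abs s, abs_nonneg s]
    exact Real.exp_le_one_iff.2 (neg_nonpos.2 (inv_pos.2 this).le)
  · exact zero_le_one

lemma bump_eq_zero {s : ℝ} (hs : 1 ≤ |s|) : bump s = 0 :=
  if_neg hs.not_gt

lemma measurable_bump : Measurable bump :=
  Measurable.ite (measurableSet_lt measurable_abs measurable_const)
    (by fun_prop) measurable_const

lemma integrable_bump : Integrable bump := by
  have hIcc : Integrable ((Icc (-1 : ℝ) 1).indicator fun _ => (1 : ℝ)) :=
    (integrableOn_const measure_Icc_lt_top.ne).integrable_indicator measurableSet_Icc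
  refine hIcc.mono' measurable_bump.aestronglyMeasurable (ae_of_all _ fun s => ?_)
  rw [Real.norm_of_nonneg (bump_nonneg s)]
  by_cases hs : |s| < 1
  · rw [indicator_of_mem (show s ∈ Icc (-1 : ℝ) 1 from abs_le.1 hs.le)]
    exact bump_le_one s
  · rw [bump_eq_zero (not_lt.1 hs)]
    exact indicator_nonneg (fun _ _ => zero_le_one) s

lemma integral_bump_pos : 0 < ∫ s, bump s := by
  rw [integral_pos_iff_support_of_nonneg bump_nonneg integrable_bump]
  have hsupp : Ioo (-1 : ℝ) 1 ⊆ Function.support bump := fun s hs => by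
    simp only [Function.mem_support, bump, if_pos (abs_lt.2 hs)]
    exact (Real.exp_pos _).ne'
  refine lt_of_lt_of_le ?_ (measure_mono hsupp)
  rw [Real.volume_Ioo]
  norm_num

section Mollifier

variable {ε : ℝ}

lemma moll_nonneg (hε : 0 < ε) (s : ℝ) : 0 ≤ moll ε s :=
  mul_nonneg (mul_nonneg (inv_pos.2 integral_bump_pos).le (inv_nonneg.2 hε.le)) (bump_nonneg _)

lemma moll_eq_zero (hε : 0 < ε) {s : ℝ} (hs : ε ≤ |s|) : moll ε s = 0 := by
  rw [moll, bump_eq_zero, mul_zero]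
  rwa [abs_div, abs_of_pos hε, one_le_div hε]

lemma moll_neg (ε s : ℝ) : moll ε (-s) = moll ε s := by
  simp only [moll, bump, neg_div, abs_neg, neg_sq]

lemma integrable_moll (hε : 0 < ε) : Integrable (moll ε) :=
  (integrable_bump.comp_div hε.ne').const_mul _

lemma integral_moll (hε : 0 < ε) : ∫ s, moll ε s = 1 := by
  unfold moll
  rw [integral_const_mul, Measure.integral_comp_div bump ε, abs_of_pos hε, smul_eq_mul,
    mul_assoc, ← mul_assoc ε⁻¹, inv_mul_cancel₀ hε.ne', one_mul, mollConst,
    inv_mul_cancel₀ integral_bump_pos.ne']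

lemma integral_moll_mul_le (hε : 0 < ε) {g : ℝ → ℝ}
    (hg : Integrable fun s => moll ε s * g s) {C : ℝ} (hC : ∀ s, |s| < ε → g s ≤ C) :
    ∫ s, moll ε s * g s ≤ C := by
  calc ∫ s, moll ε s * g s ≤ ∫ s, moll ε s * C :=
        integral_mono hg ((integrable_moll hε).mul_const C) fun s => by
          rcases lt_or_ge |s| ε with hs | hs
          · exact mul_le_mul_of_nonneg_left (hC s hs) (moll_nonneg hε s)
          · simp [moll_eq_zero hε hs]
    _ = C := by rw [integral_mul_const, integral_moll hε, one_mul]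

lemma le_integral_moll_mul (hε : 0 < ε) {g : ℝ → ℝ}
    (hg : Integrable fun s => moll ε s * g s) {C : ℝ} (hC : ∀ s, |s| < ε → C ≤ g s) :
    C ≤ ∫ s, moll ε s * g s := by
  have := integral_moll_mul_le hε (g := fun s => -g s) (C := -C) (by simpa using hg.neg)
    fun s hs => neg_le_neg (hC s hs)
  simp only [mul_neg, integral_neg] at this
  linarith

end Mollifier

section Mobility

variable {a : ℝ}

lemma mob_nonneg (a r : ℝ) : 0 ≤ mob a r := by
  unfold mob
  split_ifs with hr
  · exact Real.rpow_nonneg (by nlinarith [sq_abs r, abs_nonneg r]) a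
  · exact le_rfl

lemma mob_le_one (ha : 0 ≤ a) (r : ℝ) : mob a r ≤ 1 := by
  unfold mob
  split_ifs with hr
  · exact Real.rpow_le_one (by nlinarith [sq_abs r, abs_nonneg r]) (by nlinarith [sq_nonneg r]) ha
  · exact zero_le_one

lemma mob_neg (a r : ℝ) : mob a (-r) = mob a r := by
  simp only [mob, abs_neg, neg_sq]

lemma measurable_mob (a : ℝ) : Measurable (mob a) :=
  Measurable.ite (measurableSet_le measurable_abs measurable_const) (by fun_prop) measurable_const

lemma mob_eq_max_rpow (ha : a ≠ 0) (r : ℝ) : mob a r = max (1 - r ^ 2) 0 ^ a := by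
  unfold mob
  split_ifs with hr
  · rw [max_eq_left (by nlinarith [sq_abs r, abs_nonneg r])]
  · rw [max_eq_right (by nlinarith [sq_abs r, abs_nonneg r, not_le.1 hr]), Real.zero_rpow ha]

lemma continuous_mob (ha : 0 < a) : Continuous (mob a) := by
  rw [funext (mob_eq_max_rpow ha.ne')]
  exact (continuous_const.sub (continuous_pow 2)).max continuous_const |>.rpow_const
    fun _ => Or.inr ha.le

lemma hasCompactSupport_mob (a : ℝ) : HasCompactSupport (mob a) :=
  HasCompactSupport.intro isCompact_Icc fun _ hr => if_neg fun h => hr (abs_le.1 h)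

end Mobility

/-- The distance from `r` to the degenerate set `{|r| ≥ 1}` of `mob`, plus `ε`. -/
noncomputable def gap (ε r : ℝ) : ℝ := max (1 - |r|) 0 + ε

section Gap

variable {ε : ℝ}

lemma le_gap (ε r : ℝ) : ε ≤ gap ε r :=
  le_add_of_nonneg_left (le_max_right _ _)

lemma gap_pos (hε : 0 < ε) (r : ℝ) : 0 < gap ε r :=
  hε.trans_le (le_gap ε r)

lemma gap_anti {u v : ℝ} (h : |u| ≤ |v|) : gap ε v ≤ gap ε u :=
  add_le_add_left (max_le_max (by linarith) le_rfl) ε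

lemma gap_of_abs_le_one {r : ℝ} (hr : |r| ≤ 1) : gap ε r = 1 - |r| + ε := by
  rw [gap, max_eq_left (by linarith)]

end Gap

section RegularisedMobility

variable {a ε : ℝ}

lemma integrable_moll_mul_mob (ha : 0 ≤ a) (hε : 0 < ε) (r : ℝ) :
    Integrable fun s => moll ε s * mob a (r - s) := by
  refine (integrable_moll hε).mul_bdd (c := 1)
    ((measurable_mob a).comp (measurable_const.sub measurable_id)).aestronglyMeasurable
    (ae_of_all _ fun s => ?_)
  rw [Real.norm_of_nonneg (mob_nonneg a _)]
  exact mob_le_one ha _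

lemma mobE_pos (hε : 0 < ε) (r : ℝ) : 0 < mobE a ε r :=
  add_pos_of_nonneg_of_pos
    (integral_nonneg fun s => mul_nonneg (moll_nonneg hε s) (mob_nonneg a _))
    (Real.rpow_pos_of_pos hε a)

lemma mobE_neg (a ε r : ℝ) : mobE a ε (-r) = mobE a ε r := by
  unfold mobE
  rw [← integral_neg_eq_self]
  simp only [moll_neg, sub_neg_eq_add, ← mob_neg a (-r + _), neg_add, neg_neg, ← sub_eq_add_neg]

lemma continuous_mobE (ha : 0 < a) (hε : 0 < ε) : Continuous (mobE a ε) := by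
  have hconv : Continuous (convolution (moll ε) (mob a) (ContinuousLinearMap.mul ℝ ℝ)) :=
    (hasCompactSupport_mob a).continuous_convolution_right _
      (integrable_moll hε).locallyIntegrable (continuous_mob ha)
  exact hconv.add continuous_const

lemma mob_le_of_abs_lt (ha : 0 ≤ a) {r s : ℝ} (hs : |s| < ε) :
    mob a (r - s) ≤ (2 * gap ε r) ^ a := by
  unfold mob
  split_ifs with hrs
  · refine Real.rpow_le_rpow (by nlinarith [sq_abs (r - s), abs_nonneg (r - s)]) ?_ ha
    have h1 : 1 - (r - s) ^ 2 ≤ 2 * (1 - |r - s|) := by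
      nlinarith [sq_abs (r - s), sq_nonneg (|r - s| - 1)]
    have h2 : |r| - |s| ≤ |r - s| := abs_sub_abs_le_abs_sub r s
    have h3 : 1 - |r| ≤ max (1 - |r|) 0 := le_max_left _ _
    rw [gap]
    linarith
  · exact Real.rpow_nonneg (by linarith [gap_pos (abs_nonneg s |>.trans_lt hs) r]) a

lemma le_mob_of_abs_lt (ha : 0 ≤ a) {r s : ℝ} (hr : 2 * ε < 1 - |r|) (hs : |s| < ε) :
    ((1 - |r|) / 2) ^ a ≤ mob a (r - s) := by
  have hrs : |r - s| ≤ |r| + |s| := abs_sub _ _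
  have := abs_nonneg s
  rw [mob, if_pos (by linarith)]
  refine Real.rpow_le_rpow (by linarith) ?_ ha
  nlinarith [sq_abs (r - s), abs_nonneg (r - s)]

lemma mobE_le (ha : 0 ≤ a) (hε : 0 < ε) (r : ℝ) : mobE a ε r ≤ 2 * (2 * gap ε r) ^ a := by
  have hconv : ∫ s, moll ε s * mob a (r - s) ≤ (2 * gap ε r) ^ a :=
    integral_moll_mul_le hε (integrable_moll_mul_mob ha hε r) fun _ hs => mob_le_of_abs_lt ha hs
  have hε' : ε ^ a ≤ (2 * gap ε r) ^ a :=
    Real.rpow_le_rpow hε.le (by linarith [le_gap ε r, gap_pos hε r]) ha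
  rw [mobE]
  linarith

lemma mobE_ge (ha : 0 ≤ a) (hε : 0 < ε) (r : ℝ) : (gap ε r / 4) ^ a ≤ mobE a ε r := by
  have hconv : 0 ≤ ∫ s, moll ε s * mob a (r - s) :=
    integral_nonneg fun s => mul_nonneg (moll_nonneg hε s) (mob_nonneg a _)
  have hpos := gap_pos hε r
  rcases le_or_gt (1 - |r|) (2 * ε) with hnear | hfar
  · -- near the degenerate set the constant `ε ^ a` dominates
    have : gap ε r / 4 ≤ ε := by
      rw [gap]
      rcases le_total (1 - |r|) 0 with h | h
      · rw [max_eq_right h]; linarith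
      · rw [max_eq_left h]; linarith
    have := Real.rpow_le_rpow (by positivity) this ha
    rw [mobE]
    linarith
  · have hgap : gap ε r / 4 ≤ (1 - |r|) / 2 := by
      rw [gap, max_eq_left (by linarith)]
      linarith
    have := le_integral_moll_mul hε (integrable_moll_mul_mob ha hε r)
      fun _ hs => le_mob_of_abs_lt ha hfar hs
    have := Real.rpow_le_rpow (by positivity) hgap ha
    have := Real.rpow_nonneg hε.le a
    rw [mobE]
    linarith

lemma inv_mobE_le (ha : 0 ≤ a) (hε : 0 < ε) (r : ℝ) :
    (mobE a ε r)⁻¹ ≤ 4 ^ a * gap ε r ^ (-a) := by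
  have hpos := gap_pos hε r
  calc (mobE a ε r)⁻¹ ≤ ((gap ε r / 4) ^ a)⁻¹ :=
        inv_anti₀ (by positivity) (mobE_ge ha hε r)
    _ = 4 ^ a * gap ε r ^ (-a) := by
        rw [Real.div_rpow hpos.le (by norm_num), Real.rpow_neg hpos.le, inv_div, div_eq_mul_inv]

lemma inv_mobE_le_of_half_le_gap (ha : 0 ≤ a) (hε : 0 < ε) {r : ℝ} (hr : 1 / 2 ≤ gap ε r) :
    (mobE a ε r)⁻¹ ≤ 8 ^ a := by
  have h8 : (8 ^ a)⁻¹ ≤ mobE a ε r := by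
    rw [← Real.inv_rpow (by norm_num)]
    exact (Real.rpow_le_rpow (by norm_num) (by linarith) ha).trans (mobE_ge ha hε r)
  simpa using inv_anti₀ (by positivity) h8

end RegularisedMobility

section Potential

variable {a ε : ℝ}

lemma psiE'_neg (a ε r : ℝ) : psiE' a ε (-r) = -psiE' a ε r := by
  calc psiE' a ε (-r) = ∫ w in (0 : ℝ)..(-r), (mobE a ε (-w))⁻¹ := by
        simp only [psiE', mobE_neg]
    _ = -psiE' a ε r := by
        rw [intervalIntegral.integral_comp_neg (fun w => (mobE a ε w)⁻¹), neg_neg, neg_zero,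
          intervalIntegral.integral_symm, psiE']

lemma psiE'_nonneg (hε : 0 < ε) {r : ℝ} (hr : 0 ≤ r) : 0 ≤ psiE' a ε r :=
  intervalIntegral.integral_nonneg hr fun w _ => (inv_pos.2 (mobE_pos hε w)).le

lemma psiE'_mul_psiE'_nonneg (b : ℝ) (hε : 0 < ε) (r : ℝ) :
    0 ≤ psiE' a ε r * psiE' b ε r := by
  rcases le_total 0 r with hr | hr
  · exact mul_nonneg (psiE'_nonneg hε hr) (psiE'_nonneg hε hr)
  · have h := mul_nonneg (psiE'_nonneg (a := a) hε (neg_nonneg.2 hr))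
      (psiE'_nonneg (a := b) hε (neg_nonneg.2 hr))
    rwa [psiE'_neg, psiE'_neg, neg_mul_neg] at h

lemma le_psiE' (ha : 0 < a) (hε : ε ∈ Ioo (0 : ℝ) 1) {r : ℝ} (hr : (1 + ε) / 2 ≤ r) :
    (2 * 4 ^ a)⁻¹ * gap ε r ^ (1 - a) ≤ psiE' a ε r := by
  obtain ⟨hε0, hε1⟩ := hε
  have hA : gap ε r = 1 - min r 1 + ε := by
    rcases le_total r 1 with h | h
    · rw [min_eq_left h, gap_of_abs_le_one (by rw [abs_of_nonneg (by linarith)]; exact h),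
        abs_of_nonneg (by linarith)]
    · rw [min_eq_right h, gap, max_eq_right (by rw [abs_of_nonneg (by linarith)]; linarith)]
      ring
  have hr' : (1 + ε) / 2 ≤ min r 1 := le_min hr (by linarith)
  set r' := min r 1
  set A := gap ε r
  have hApos : 0 < A := gap_pos hε0 r
  have hm : 0 ≤ r' - A := by linarith
  have hbound : ∀ w ∈ Icc (r' - A) r', (2 * (4 * A) ^ a)⁻¹ ≤ (mobE a ε w)⁻¹ := by
    intro w hw
    have hgap : gap ε w ≤ 2 * A := by
      calc gap ε w ≤ gap ε (r' - A) := gap_anti (by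
            rw [abs_of_nonneg hm, abs_of_nonneg (hm.trans hw.1)]; exact hw.1)
        _ = 2 * A := by
            rw [gap_of_abs_le_one (by rw [abs_of_nonneg hm]; linarith [min_le_right r 1]),
              abs_of_nonneg hm]
            linarith
    refine inv_anti₀ (mobE_pos hε0 w) ((mobE_le ha.le hε0 w).trans ?_)
    have := Real.rpow_le_rpow (by linarith [gap_pos hε0 w]) (by linarith : 2 * gap ε w ≤ 4 * A)
      ha.le
    linarith
  have hint : IntervalIntegrable (fun w => (mobE a ε w)⁻¹) volume 0 r :=
    ((continuous_mobE ha hε0).inv₀ fun w => (mobE_pos hε0 w).ne').intervalIntegrable 0 r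
  calc (2 * 4 ^ a)⁻¹ * A ^ (1 - a) = (r' - (r' - A)) * (2 * (4 * A) ^ a)⁻¹ := by
        rw [sub_sub_cancel, Real.mul_rpow (by norm_num) hApos.le, Real.rpow_sub hApos,
          Real.rpow_one]
        field_simp
    _ ≤ ∫ w in (r' - A)..r', (mobE a ε w)⁻¹ := by
        have hsub : uIcc (r' - A) r' ⊆ uIcc 0 r := by
          rw [uIcc_of_le (by linarith), uIcc_of_le (by linarith)]
          exact Icc_subset_Icc hm (min_le_left r 1)
        have := intervalIntegral.integral_mono_on (f := fun _ => (2 * (4 * A) ^ a)⁻¹)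
          (by linarith) intervalIntegrable_const (hint.mono_set hsub) hbound
        rwa [intervalIntegral.integral_const, smul_eq_mul] at this
    _ ≤ psiE' a ε r :=
        intervalIntegral.integral_mono_interval hm (by linarith) (min_le_left r 1)
          (ae_of_all _ fun w => (inv_pos.2 (mobE_pos hε0 w)).le) hint

lemma le_psiE'_mul_psiE' {b : ℝ} (ha : 0 < a) (hb : 0 < b) (hε : ε ∈ Ioo (0 : ℝ) 1)
    {r : ℝ} (hr : (1 + ε) / 2 ≤ r) :
    (2 * 4 ^ a)⁻¹ * (2 * 4 ^ b)⁻¹ * gap ε r ^ (-(a + b - 2)) ≤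
      psiE' a ε r * psiE' b ε r := by
  have hA := gap_pos hε.1 r
  have hpsia := le_psiE' ha hε hr
  calc (2 * 4 ^ a)⁻¹ * (2 * 4 ^ b)⁻¹ * gap ε r ^ (-(a + b - 2))
      = ((2 * 4 ^ a)⁻¹ * gap ε r ^ (1 - a)) * ((2 * 4 ^ b)⁻¹ * gap ε r ^ (1 - b)) := by
        rw [mul_mul_mul_comm, ← Real.rpow_add hA]
        ring_nf
    _ ≤ psiE' a ε r * psiE' b ε r :=
        mul_le_mul hpsia (le_psiE' hb hε hr) (by positivity) (hpsia.trans' (by positivity))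

end Potential

/-- for ς, ζ ≥ 1 with ς + ζ > 2 there is K > 0 such that for all
ε ∈ (0,1) and r ∈ ℝ,
`Ψ'_{ς,ε}(r) · Ψ'_{ζ,ε}(r) ≥ K Ψ''_{ς+ζ-2,ε}(r) − K⁻¹`, with `Ψ'' = 1/m`. -/
theorem stmt9 (ς ζ : ℝ) (hς : 1 ≤ ς) (hζ : 1 ≤ ζ) (hsum : 2 < ς + ζ) :
    ∃ K > (0:ℝ), ∀ ε ∈ Ioo (0:ℝ) 1, ∀ r : ℝ,
      K * (mobE (ς + ζ - 2) ε r)⁻¹ - K⁻¹ ≤ psiE' ς ε r * psiE' ζ ε r := by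
  set σ := ς + ζ - 2
  set c := (2 * 4 ^ ς)⁻¹ * (2 * (4 : ℝ) ^ ζ)⁻¹
  refine ⟨min (c / 4 ^ σ) (min 1 (1 / 8 ^ σ)), by positivity, fun ε hε r => ?_⟩
  set K := min (c / 4 ^ σ) (min 1 (1 / 8 ^ σ))
  have hK : 0 < K := by positivity
  wlog hr : 0 ≤ r generalizing r
  · simpa only [mobE_neg, psiE'_neg, neg_mul_neg] using this (-r) (by linarith)
  rcases le_or_gt ((1 + ε) / 2) r with hfar | hnear
  · have hg := gap_pos hε.1 r
    calc K * (mobE σ ε r)⁻¹ - K⁻¹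
        ≤ K * (mobE σ ε r)⁻¹ := sub_le_self _ (inv_pos.2 hK).le
      _ ≤ c / 4 ^ σ * (4 ^ σ * gap ε r ^ (-σ)) :=
          mul_le_mul (min_le_left _ _) (inv_mobE_le (by linarith) hε.1 r)
            (inv_pos.2 (mobE_pos hε.1 r)).le (by positivity)
      _ = c * gap ε r ^ (-σ) := by field_simp
      _ ≤ psiE' ς ε r * psiE' ζ ε r := le_psiE'_mul_psiE' (by linarith) (by linarith) hε hfar
  · have hgap : 1 / 2 ≤ gap ε r := by
      have := le_max_left (1 - r) 0
      rw [gap, abs_of_nonneg hr]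
      linarith [hε.1]
    have h8 := mul_le_mul_of_nonneg_left
      (inv_mobE_le_of_half_le_gap (by linarith) hε.1 hgap (a := σ)) hK.le
    have hK8 : K * 8 ^ σ ≤ 1 :=
      (le_div_iff₀ (by positivity)).1 ((min_le_right _ _).trans (min_le_right _ _))
    have hK1 : 1 ≤ K⁻¹ := (one_le_inv₀ hK).2 ((min_le_right _ _).trans (min_le_left _ _))
    linarith [psiE'_mul_psiE'_nonneg ζ (a := ς) hε.1 r]
end
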